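/- arXiv:2412.14956 — 3 statements merged into one kernel-verified Lean document; each statement's English description precedes it below -/
import Mathlib

section
/- Let f : (0,∞) → ℝ be twice continuously differentiable and suppose there exist β ≥ 0 and M > 0 such that |f(x)| ≤ M e^{β|log x|}, |f′(x)| ≤ M e^{β|log x|}, and |(x²/2) f″(x)| ≤ M e^{β|log x|} for all x > 0. Then for every t > 0 and x > 0, the function x ↦ ∫₀^∞ f(w) p_GBM(t, w; x) dw is twice differentiable and (x²/2) ∂²_x ∫₀^∞ f(w) p_GBM(t, w; x) dw = ∫₀^∞ (w²/2) f″(w) p_GBM(t, w; x) dw; in particular the Black–Scholes operator G = (x²/2)∂²_x commutes with the kernel operator: G P_t f = P_t G f. -/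
/-!
The substitution `w = x e^y` turns `P_t g (x)` into `∫ g (x e^y) k_t(y) dy`, where the kernel
`k_t(y) = e^{-t/8} p(t, y) e^{-y/2}` no longer depends on `x` and, being a Gaussian times an
exponential, integrates every `e^{a|y|}`. Polynomial growth of `g` and `g'` at `0` and `∞` becomes
exponential growth in `y`, so differentiation under the integral sign gives
`∂ₓ ∫ g (x e^y) ρ(y) dy = ∫ g' (x e^y) e^y ρ(y) dy`. Applying this twice,
`∂ₓ² P_t f (x) = ∫ f'' (x e^y) e^{2y} k_t(y) dy`, and multiplying by `x²/2` and undoing the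
substitution gives `P_t (G f) (x)`.
-/

open MeasureTheory Set

/-- Heat kernel `p(t,x) = (2πt)^{-1/2} e^{-x²/(2t)}`. -/
noncomputable def heatK (t x : ℝ) : ℝ :=
  (Real.sqrt (2 * Real.pi * t))⁻¹ * Real.exp (-x ^ 2 / (2 * t))

/-- Geometric Brownian motion transition kernel
`p_GBM(t,w;x) = x^{1/2} e^{-t/8} p(t, log w − log x) w^{-3/2}`. -/
noncomputable def pGBM (t w x : ℝ) : ℝ :=
  Real.sqrt x * Real.exp (-t / 8) * heatK t (Real.log w - Real.log x) * w ^ (-(3 : ℝ) / 2)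

open Real Filter Topology

def HasIntegrableExpMoments (ρ : ℝ → ℝ) : Prop :=
  ∀ a : ℝ, Integrable (fun y => exp (a * y) * ρ y)

namespace HasIntegrableExpMoments

variable {ρ : ℝ → ℝ}

theorem aestronglyMeasurable (hρ : HasIntegrableExpMoments ρ) : AEStronglyMeasurable ρ := by
  simpa using (hρ 0).aestronglyMeasurable

theorem const_mul (hρ : HasIntegrableExpMoments ρ) (c : ℝ) :
    HasIntegrableExpMoments (fun y => c * ρ y) := fun a => by
  simpa only [mul_left_comm] using (hρ a).const_mul c

theorem exp_mul (hρ : HasIntegrableExpMoments ρ) :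
    HasIntegrableExpMoments (fun y => exp y * ρ y) := fun a => by
  simpa only [← mul_assoc, ← exp_add, add_one_mul] using hρ (a + 1)

theorem integrable_exp_abs_mul (hρ : HasIntegrableExpMoments ρ) (c : ℝ) :
    Integrable (fun y => exp (c * |y|) * |ρ y|) := by
  refine ((hρ c).norm.add (hρ (-c)).norm).mono'
    ((by fun_prop : Continuous fun y => exp (c * |y|)).aestronglyMeasurable.mul
      hρ.aestronglyMeasurable.norm) (ae_of_all _ fun y => ?_)
  simp only [norm_mul, norm_eq_abs, abs_exp, abs_abs]
  rcases le_total 0 y with hy | hy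
  · rw [abs_of_nonneg hy]
    exact le_add_of_nonneg_right (by positivity)
  · rw [abs_of_nonpos hy, mul_neg, ← neg_mul]
    exact le_add_of_nonneg_left (by positivity)

end HasIntegrableExpMoments

theorem hasIntegrableExpMoments_heatK {t : ℝ} (ht : 0 < t) :
    HasIntegrableExpMoments (heatK t) := by
  intro a
  have hsq : (fun y => exp (a * y) * heatK t y) = fun y =>
      ((sqrt (2 * π * t))⁻¹ * exp (a ^ 2 * t / 2)) *
        exp (-(1 / (2 * t)) * (y - a * t) ^ 2) := by
    ext y
    rw [heatK, mul_left_comm, mul_assoc, ← exp_add, mul_assoc, ← exp_add]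
    congr 2
    field_simp
    ring
  rw [hsq]
  exact ((integrable_exp_neg_mul_sq (by positivity)).comp_sub_right (a * t)).const_mul _

/-- The kernel `p_GBM(t, x e^y; x)` in the variable `y`, including the Jacobian `x e^y`. -/
noncomputable def logKernel (t y : ℝ) : ℝ :=
  exp (-t / 8) * heatK t y * exp (-y / 2)

theorem hasIntegrableExpMoments_logKernel {t : ℝ} (ht : 0 < t) :
    HasIntegrableExpMoments (logKernel t) := fun a => by
  have h := ((hasIntegrableExpMoments_heatK ht).const_mul (exp (-t / 8))) (a - 1 / 2)
  refine h.congr (ae_of_all _ fun y => ?_)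
  have hsplit : exp ((a - 1 / 2) * y) = exp (a * y) * exp (-y / 2) := by
    rw [← exp_add]; ring_nf
  simp only [logKernel, hsplit]
  ring

theorem mul_exp_mul_pGBM {t x : ℝ} (hx : 0 < x) (y : ℝ) :
    x * exp y * pGBM t (x * exp y) x = logKernel t y := by
  have hxpow : x * (x ^ (1 / 2 : ℝ) * x ^ (-(3 : ℝ) / 2)) = 1 := by
    rw [← rpow_add hx, show (1 / 2 : ℝ) + -3 / 2 = -1 by norm_num, rpow_neg_one,
      mul_inv_cancel₀ hx.ne']
  have hexp : exp y * exp (y * (-(3 : ℝ) / 2)) = exp (-y / 2) := by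
    rw [← exp_add]; ring_nf
  rw [pGBM, log_mul hx.ne' (exp_pos y).ne', log_exp, add_sub_cancel_left,
    mul_rpow hx.le (exp_pos y).le, rpow_def_of_pos (exp_pos y), log_exp, sqrt_eq_rpow, logKernel]
  linear_combination exp (-t / 8) * heatK t y * exp y * exp (y * (-3 / 2)) * hxpow +
    exp (-t / 8) * heatK t y * hexp

theorem integral_mul_pGBM_eq_integral_logKernel {t x : ℝ} (hx : 0 < x) (g : ℝ → ℝ) :
    ∫ w in Ioi 0, g w * pGBM t w x = ∫ y, g (x * exp y) * logKernel t y := by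
  have himage : (fun y => x * exp y) '' univ = Ioi 0 := by
    rw [image_univ, show (fun y => x * exp y) = (x * ·) ∘ exp from rfl, range_comp, range_exp,
      image_mul_left_Ioi hx, mul_zero]
  have hcov := integral_image_eq_integral_abs_deriv_smul MeasurableSet.univ
    (fun y _ => ((hasDerivAt_exp y).const_mul x).hasDerivWithinAt)
    (fun a _ b _ hab => exp_injective (mul_left_cancel₀ hx.ne' hab)) (fun w => g w * pGBM t w x)
  rw [himage, Measure.restrict_univ] at hcov
  rw [hcov]
  congr 1 with y
  rw [smul_eq_mul, abs_of_pos (by positivity), ← mul_exp_mul_pGBM hx y]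
  ring

/-- Since `e^{β|log w|} = max (w ^ β) (w ^ (-β))`, this is polynomial growth at `0` and `∞`. -/
def LogExpBounded (g : ℝ → ℝ) : Prop :=
  ∃ K β : ℝ, ∀ w, 0 < w → |g w| ≤ K * exp (β * |log w|)

namespace LogExpBounded

variable {g : ℝ → ℝ}

theorem exists_nonneg (hg : LogExpBounded g) :
    ∃ K β : ℝ, 0 ≤ K ∧ 0 ≤ β ∧ ∀ w, 0 < w → |g w| ≤ K * exp (β * |log w|) := by
  obtain ⟨K, β, hbound⟩ := hg
  refine ⟨|K|, |β|, abs_nonneg K, abs_nonneg β, fun w hw => (hbound w hw).trans ?_⟩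
  exact mul_le_mul (le_abs_self K)
    (exp_le_exp.2 (mul_le_mul_of_nonneg_right (le_abs_self β) (abs_nonneg _)))
    (exp_pos _).le (abs_nonneg K)

theorem of_sq_mul (hg : LogExpBounded (fun w => w ^ 2 / 2 * g w)) : LogExpBounded g := by
  obtain ⟨K, β, hK, -, hbound⟩ := hg.exists_nonneg
  refine ⟨2 * K, β + 2, fun w hw => ?_⟩
  have hsq : (w ^ 2)⁻¹ = exp (-2 * log w) := by
    rw [← rpow_natCast, ← rpow_neg hw.le, rpow_def_of_pos hw]
    ring_nf
  have hw2 : (0 : ℝ) < w ^ 2 / 2 := by positivity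
  have h := hbound w hw
  rw [abs_mul, abs_of_pos hw2, ← le_div_iff₀' hw2] at h
  calc |g w| ≤ K * exp (β * |log w|) / (w ^ 2 / 2) := h
    _ = 2 * K * exp (β * |log w|) * exp (-2 * log w) := by rw [← hsq]; field_simp
    _ ≤ 2 * K * exp (β * |log w|) * exp (2 * |log w|) := by
        gcongr 2 * K * exp (β * |log w|) * exp ?_; linarith [neg_abs_le (log w)]
    _ = 2 * K * exp ((β + 2) * |log w|) := by rw [mul_assoc, ← exp_add]; ring_nf

theorem exists_bound_comp_mul_exp (hg : LogExpBounded g) {a b : ℝ} (ha : 0 < a) :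
    ∃ C c : ℝ, ∀ x ∈ Icc a b, ∀ y, |g (x * exp y)| ≤ C * exp (c * |y|) := by
  obtain ⟨K, β, hK, hβ, hbound⟩ := hg.exists_nonneg
  set L := max |log a| |log b|
  refine ⟨K * exp (β * L), β, fun x hx y => ?_⟩
  have hx0 : 0 < x := ha.trans_le hx.1
  have hlog : |log x| ≤ L :=
    abs_le_max_abs_abs (log_le_log ha hx.1) (log_le_log hx0 hx.2)
  calc |g (x * exp y)| ≤ K * exp (β * |log x + y|) := by
        simpa [log_mul hx0.ne' (exp_pos y).ne'] using hbound (x * exp y) (by positivity)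
    _ ≤ K * exp (β * (L + |y|)) := by
        gcongr; exact (abs_add_le _ _).trans (by linarith)
    _ = K * exp (β * L) * exp (β * |y|) := by rw [mul_assoc, ← exp_add]; ring_nf

end LogExpBounded

theorem hasDerivAt_integral_comp_mul_exp {g ρ : ℝ → ℝ} (hg : DifferentiableOn ℝ g (Ioi 0))
    (hg₀ : LogExpBounded g) (hg₁ : LogExpBounded (deriv g)) (hρ : HasIntegrableExpMoments ρ)
    {z : ℝ} (hz : 0 < z) :
    HasDerivAt (fun x => ∫ y, g (x * exp y) * ρ y)
      (∫ y, deriv g (z * exp y) * (exp y * ρ y)) z := by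
  have hs : Icc (z / 2) (2 * z) ∈ 𝓝 z := Icc_mem_nhds (by linarith) (by linarith)
  have hpos : ∀ x ∈ Icc (z / 2) (2 * z), 0 < x := fun x hx => (half_pos hz).trans_le hx.1
  obtain ⟨C₀, c₀, hbound₀⟩ := hg₀.exists_bound_comp_mul_exp (b := 2 * z) (half_pos hz)
  obtain ⟨C₁, c₁, hbound₁⟩ := hg₁.exists_bound_comp_mul_exp (b := 2 * z) (half_pos hz)
  have hmeas : ∀ x ∈ Icc (z / 2) (2 * z),
      AEStronglyMeasurable (fun y => g (x * exp y) * ρ y) := fun x hx =>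
    ((hg.continuousOn.comp_continuous (by fun_prop) fun y =>
      mem_Ioi.2 (mul_pos (hpos x hx) (exp_pos y))).aestronglyMeasurable).mul
      hρ.aestronglyMeasurable
  refine (hasDerivAt_integral_of_dominated_loc_of_deriv_le
      (F' := fun x y => deriv g (x * exp y) * (exp y * ρ y))
      (bound := fun y => C₁ * (exp ((c₁ + 1) * |y|) * |ρ y|))
      hs (eventually_of_mem hs hmeas) ?_ ?_ ?_ ?_ ?_).2
  · have hz' : z ∈ Icc (z / 2) (2 * z) := ⟨by linarith, by linarith⟩
    refine ((hρ.integrable_exp_abs_mul c₀).const_mul C₀).mono' (hmeas z hz')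
      (ae_of_all _ fun y => ?_)
    rw [norm_mul, norm_eq_abs, norm_eq_abs, ← mul_assoc]
    exact mul_le_mul_of_nonneg_right (hbound₀ z hz' y) (abs_nonneg _)
  · exact ((measurable_deriv g).comp (by fun_prop)).aestronglyMeasurable.mul
      ((continuous_exp.aestronglyMeasurable).mul hρ.aestronglyMeasurable)
  · refine ae_of_all _ fun y x hx => ?_
    rw [norm_mul, norm_mul, norm_eq_abs, norm_eq_abs, norm_eq_abs, abs_exp, add_one_mul, exp_add]
    calc |deriv g (x * exp y)| * (exp y * |ρ y|)
        ≤ C₁ * exp (c₁ * |y|) * (exp |y| * |ρ y|) := by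
          gcongr
          exacts [(abs_nonneg _).trans (hbound₁ x hx y), hbound₁ x hx y, le_abs_self y]
      _ = C₁ * (exp (c₁ * |y|) * exp |y| * |ρ y|) := by ring
  · exact (hρ.integrable_exp_abs_mul (c₁ + 1)).const_mul C₁
  · refine ae_of_all _ fun y x hx => ?_
    have hinner : HasDerivAt (fun x => x * exp y) (exp y) x := by
      simpa using (hasDerivAt_id x).mul_const (exp y)
    have hgx := (hg.differentiableAt (Ioi_mem_nhds (mul_pos (hpos x hx) (exp_pos y)))).hasDerivAt
    have hchain := (hgx.comp x hinner).mul_const (ρ y)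
    rw [mul_assoc] at hchain
    exact hchain

theorem kernel_commutes_with_BS_operator_general
    (β M : ℝ)
    (f : ℝ → ℝ) (hf : ContDiffOn ℝ 2 f (Set.Ioi (0 : ℝ)))
    (hbd₀ : ∀ x : ℝ, 0 < x → |f x| ≤ M * Real.exp (β * |Real.log x|))
    (hbd₁ : ∀ x : ℝ, 0 < x → |deriv f x| ≤ M * Real.exp (β * |Real.log x|))
    (hbd₂ : ∀ x : ℝ, 0 < x →
      |x ^ 2 / 2 * deriv (deriv f) x| ≤ M * Real.exp (β * |Real.log x|)) :
    ∀ t : ℝ, 0 < t → ∀ x : ℝ, 0 < x →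
      DifferentiableAt ℝ (fun z => ∫ w in Set.Ioi (0 : ℝ), f w * pGBM t w z) x
      ∧ DifferentiableAt ℝ (deriv (fun z => ∫ w in Set.Ioi (0 : ℝ), f w * pGBM t w z)) x
      ∧ x ^ 2 / 2 * deriv (deriv (fun z => ∫ w in Set.Ioi (0 : ℝ), f w * pGBM t w z)) x
          = ∫ w in Set.Ioi (0 : ℝ), w ^ 2 / 2 * deriv (deriv f) w * pGBM t w x := by
  intro t ht x hx
  set P := fun z => ∫ w in Ioi (0 : ℝ), f w * pGBM t w z
  have hk := hasIntegrableExpMoments_logKernel ht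
  have hf' : DifferentiableOn ℝ (deriv f) (Ioi 0) :=
    (hf.deriv_of_isOpen isOpen_Ioi (m := 1) (by norm_num)).differentiableOn one_ne_zero
  have hP' : ∀ z, 0 < z →
      HasDerivAt P (∫ y, deriv f (z * exp y) * (exp y * logKernel t y)) z :=
    fun z hz => (hasDerivAt_integral_comp_mul_exp (hf.differentiableOn (by norm_num))
      ⟨M, β, hbd₀⟩ ⟨M, β, hbd₁⟩ hk hz).congr_of_eventuallyEq
      (eventually_of_mem (Ioi_mem_nhds hz) fun z hz =>
        integral_mul_pGBM_eq_integral_logKernel hz f)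
  have hP'' : HasDerivAt (deriv P)
      (∫ y, deriv (deriv f) (x * exp y) * (exp y * (exp y * logKernel t y))) x :=
    (hasDerivAt_integral_comp_mul_exp hf' ⟨M, β, hbd₁⟩ (LogExpBounded.of_sq_mul ⟨M, β, hbd₂⟩)
      hk.exp_mul hx).congr_of_eventuallyEq
      (eventually_of_mem (Ioi_mem_nhds hx) fun z hz => (hP' z hz).deriv)
  refine ⟨(hP' x hx).differentiableAt, hP''.differentiableAt, ?_⟩
  rw [hP''.deriv, integral_mul_pGBM_eq_integral_logKernel hx, ← integral_const_mul]
  congr 1 with y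
  ring

/-- If `f ∈ C²(0,∞)` and `f`, `f′`, `(x²/2) f″` all grow at most like
`M e^{β|log x|}`, then for every `t > 0` and `x > 0` the function
`P_t f(x) = ∫₀^∞ f(w) p_GBM(t,w;x) dw` is twice differentiable at `x` and the
Black–Scholes operator `G = (x²/2)∂²ₓ` commutes with the kernel operator:
`G P_t f(x) = P_t (G f)(x)`. -/
theorem kernel_commutes_with_BS_operator
    (β M : ℝ) (hβ : 0 ≤ β) (hM : 0 < M)
    (f : ℝ → ℝ) (hf : ContDiffOn ℝ 2 f (Set.Ioi (0 : ℝ)))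
    (hbd₀ : ∀ x : ℝ, 0 < x → |f x| ≤ M * Real.exp (β * |Real.log x|))
    (hbd₁ : ∀ x : ℝ, 0 < x → |deriv f x| ≤ M * Real.exp (β * |Real.log x|))
    (hbd₂ : ∀ x : ℝ, 0 < x →
      |x ^ 2 / 2 * deriv (deriv f) x| ≤ M * Real.exp (β * |Real.log x|)) :
    ∀ t : ℝ, 0 < t → ∀ x : ℝ, 0 < x →
      DifferentiableAt ℝ (fun z => ∫ w in Set.Ioi (0 : ℝ), f w * pGBM t w z) x
      ∧ DifferentiableAt ℝ (deriv (fun z => ∫ w in Set.Ioi (0 : ℝ), f w * pGBM t w z)) x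
      ∧ x ^ 2 / 2 * deriv (deriv (fun z => ∫ w in Set.Ioi (0 : ℝ), f w * pGBM t w z)) x
          = ∫ w in Set.Ioi (0 : ℝ), w ^ 2 / 2 * deriv (deriv f) w * pGBM t w x :=
  kernel_commutes_with_BS_operator_general β M f hf hbd₀ hbd₁ hbd₂
end

section
/- Let K ⊂ (0,∞) be a compact set, let C₁, C₂ > 0, and let f : (0,∞) → ℝ be continuous with |f(x)| ≤ C₁ e^{C₂|log x|} for all x > 0. Then for every t > 0, with P_t f(x) = ∫₀^∞ f(w) p_GBM(t, w; x) dw and M := max{ |log(min K)|, |log(max K)| }, one has ∫_K |P_t f(x)| dx ≤ 2 C₁ e^{(C₂ + 2) M} e^{C₂(C₂+1) t / 2}. -/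
open MeasureTheory Set

/-!
In the logarithmic variable `z = log w - log x` the kernel `w ↦ w · p_GBM(t, w; x)` becomes
`e^{-t/8} e^{-z/2} p(t, z)`, so `|P_t f(e^u)| ≤ C₁ e^{C₂|u|} e^{-t/8} ∫ e^{C₂|z| - z/2} p(t, z) dz`.
Splitting `e^{C₂|z|} ≤ e^{C₂ z} + e^{-C₂ z}` leaves two Gaussian moment generating functions
`∫ e^{a z} p(t, z) dz = e^{a² t / 2}` with `a = -1/2 ± C₂`, and `e^{-t/8} e^{a² t / 2} ≤ e^{C₂(C₂+1)t/2}`.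
Integrating this pointwise bound over `K`, whose measure is at most `max K ≤ e^M`, gives the claim.
-/

open Real ProbabilityTheory

lemma heatK_eq_gaussianPDFReal {t : ℝ} (ht : 0 ≤ t) : heatK t = gaussianPDFReal 0 t.toNNReal := by
  ext x
  simp [heatK, gaussianPDFReal, Real.coe_toNNReal _ ht]

lemma heatK_nonneg (t x : ℝ) : 0 ≤ heatK t x := by
  unfold heatK; positivity

lemma integral_exp_mul_mul_heatK {t : ℝ} (ht : 0 < t) (a : ℝ) :
    ∫ y, exp (a * y) * heatK t y = exp (a ^ 2 * t / 2) := by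
  have hmgf := congrFun (mgf_id_gaussianReal (μ := 0) (v := t.toNNReal)) a
  rw [mgf, integral_gaussianReal_eq_integral_smul (by simpa using ht)] at hmgf
  simp only [id, smul_eq_mul, Real.coe_toNNReal _ ht.le, zero_mul, zero_add] at hmgf
  rw [heatK_eq_gaussianPDFReal ht.le]
  simp_rw [mul_comm (exp _)]
  rw [hmgf]
  ring_nf

lemma integrable_exp_mul_mul_heatK {t : ℝ} (ht : 0 < t) (a : ℝ) :
    Integrable fun y => exp (a * y) * heatK t y :=
  Integrable.of_integral_ne_zero <| by rw [integral_exp_mul_mul_heatK ht]; positivity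

lemma exp_mul_abs_add_le (b c z : ℝ) :
    exp (c * |z| + b * z) ≤ exp ((b + c) * z) + exp ((b - c) * z) := by
  rcases le_total 0 z with hz | hz
  · rw [abs_of_nonneg hz, show c * z + b * z = (b + c) * z by ring]
    exact le_add_of_nonneg_right (exp_pos _).le
  · rw [abs_of_nonpos hz, show c * -z + b * z = (b - c) * z by ring]
    exact le_add_of_nonneg_left (exp_pos _).le

lemma integral_le_of_le_mul_exp_mul_abs_add_mul_heatK {t : ℝ} (ht : 0 < t) {g : ℝ → ℝ}
    (hg₀ : ∀ z, 0 ≤ g z) {A b c : ℝ} (hA : 0 ≤ A)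
    (hg : ∀ z, g z ≤ A * (exp (c * |z| + b * z) * heatK t z)) :
    ∫ z, g z ≤ A * (exp ((b + c) ^ 2 * t / 2) + exp ((b - c) ^ 2 * t / 2)) := by
  have hint := ((integrable_exp_mul_mul_heatK ht (b + c)).add
    (integrable_exp_mul_mul_heatK ht (b - c))).const_mul A
  calc ∫ z, g z
      ≤ ∫ z, A * (exp ((b + c) * z) * heatK t z + exp ((b - c) * z) * heatK t z) := by
        refine integral_mono_of_nonneg (.of_forall hg₀) hint (.of_forall fun z => ?_)
        simp only [← add_mul]
        exact (hg z).trans (mul_le_mul_of_nonneg_left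
          (mul_le_mul_of_nonneg_right (exp_mul_abs_add_le b c z) (heatK_nonneg t z)) hA)
    _ = _ := by
        rw [integral_const_mul, integral_add (integrable_exp_mul_mul_heatK ht _)
          (integrable_exp_mul_mul_heatK ht _), integral_exp_mul_mul_heatK ht,
          integral_exp_mul_mul_heatK ht]

lemma integral_Ioi_zero_eq_integral_exp_smul_comp_exp {E : Type*} [NormedAddCommGroup E]
    [NormedSpace ℝ E] (g : ℝ → E) : ∫ w in Ioi 0, g w = ∫ y, exp y • g (exp y) := by
  rw [← range_exp, ← image_univ, integral_image_eq_integral_abs_deriv_smul MeasurableSet.univ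
    (fun y _ => (hasDerivAt_exp y).hasDerivWithinAt) exp_injective.injOn g]
  simp [abs_of_pos (exp_pos _)]

lemma exp_add_mul_pGBM_exp_add (t u z : ℝ) :
    exp (u + z) * pGBM t (exp (u + z)) (exp u) = exp (-t / 8) * (exp (-z / 2) * heatK t z) := by
  rw [pGBM, log_exp, log_exp, ← exp_half, ← exp_mul, add_sub_cancel_left]
  have hexp : exp (u + z) * exp (u / 2) * exp ((u + z) * (-3 / 2)) = exp (-z / 2) := by
    rw [← exp_add, ← exp_add]; ring_nf
  rw [← hexp]; ring

lemma integral_Ioi_mul_pGBM_exp (g : ℝ → ℝ) (t u : ℝ) :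
    ∫ w in Ioi 0, g w * pGBM t w (exp u)
      = exp (-t / 8) * ∫ z, g (exp (u + z)) * (exp (-z / 2) * heatK t z) := by
  rw [integral_Ioi_zero_eq_integral_exp_smul_comp_exp,
    ← integral_add_left_eq_self _ u, ← integral_const_mul]
  congr 1 with z
  rw [smul_eq_mul, mul_left_comm, exp_add_mul_pGBM_exp_add]
  ring

lemma pGBM_nonneg (t : ℝ) {w : ℝ} (hw : 0 ≤ w) (x : ℝ) : 0 ≤ pGBM t w x := by
  have := heatK_nonneg t (log w - log x)
  unfold pGBM; positivity

theorem abs_integral_mul_pGBM_exp_le {t : ℝ} (ht : 0 < t) {C₁ C₂ : ℝ} (hC₁ : 0 ≤ C₁)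
    (hC₂ : 0 ≤ C₂) {f : ℝ → ℝ} (hbd : ∀ x, 0 < x → |f x| ≤ C₁ * exp (C₂ * |log x|)) (u : ℝ) :
    |∫ w in Ioi 0, f w * pGBM t w (exp u)|
      ≤ 2 * C₁ * exp (C₂ * |u|) * exp (C₂ * (C₂ + 1) * t / 2) := by
  have hf : ∀ z, |f (exp (u + z))| * (exp (-z / 2) * heatK t z)
      ≤ C₁ * exp (C₂ * |u|) * (exp (C₂ * |z| + -1 / 2 * z) * heatK t z) := fun z => by
    have hfz : |f (exp (u + z))| ≤ C₁ * exp (C₂ * |u|) * exp (C₂ * |z|) :=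
      calc |f (exp (u + z))| ≤ C₁ * exp (C₂ * |u + z|) := by simpa using hbd _ (exp_pos (u + z))
        _ ≤ C₁ * exp (C₂ * |u| + C₂ * |z|) := by
          rw [← mul_add]; gcongr; exact abs_add_le u z
        _ = C₁ * exp (C₂ * |u|) * exp (C₂ * |z|) := by rw [exp_add, mul_assoc]
    have := heatK_nonneg t z
    calc |f (exp (u + z))| * (exp (-z / 2) * heatK t z)
        ≤ C₁ * exp (C₂ * |u|) * exp (C₂ * |z|) * (exp (-z / 2) * heatK t z) := by gcongr
      _ = _ := by rw [exp_add, show -1 / 2 * z = -z / 2 by ring]; ring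
  have e₁ : exp (-t / 8) * exp ((-1 / 2 + C₂) ^ 2 * t / 2) ≤ exp (C₂ * (C₂ + 1) * t / 2) := by
    rw [← exp_add]; gcongr; nlinarith [mul_nonneg hC₂ ht.le]
  have e₂ : exp (-t / 8) * exp ((-1 / 2 - C₂) ^ 2 * t / 2) ≤ exp (C₂ * (C₂ + 1) * t / 2) := by
    rw [← exp_add]; gcongr; nlinarith [mul_nonneg hC₂ ht.le]
  calc |∫ w in Ioi 0, f w * pGBM t w (exp u)|
      ≤ ∫ w in Ioi 0, |f w| * pGBM t w (exp u) := by
        refine abs_integral_le_integral_abs.trans_eq (setIntegral_congr_fun measurableSet_Ioi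
          fun w hw => ?_)
        rw [abs_mul, abs_of_nonneg (pGBM_nonneg t (le_of_lt hw) _)]
    _ = exp (-t / 8) * ∫ z, |f (exp (u + z))| * (exp (-z / 2) * heatK t z) :=
        integral_Ioi_mul_pGBM_exp _ t u
    _ ≤ exp (-t / 8) * (C₁ * exp (C₂ * |u|)
          * (exp ((-1 / 2 + C₂) ^ 2 * t / 2) + exp ((-1 / 2 - C₂) ^ 2 * t / 2))) := by
        gcongr
        exact integral_le_of_le_mul_exp_mul_abs_add_mul_heatK ht
          (fun z => mul_nonneg (abs_nonneg _) (mul_nonneg (exp_pos _).le (heatK_nonneg t z)))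
          (by positivity) hf
    _ = C₁ * exp (C₂ * |u|) * (exp (-t / 8) * exp ((-1 / 2 + C₂) ^ 2 * t / 2)
          + exp (-t / 8) * exp ((-1 / 2 - C₂) ^ 2 * t / 2)) := by ring
    _ ≤ C₁ * exp (C₂ * |u|) * (exp (C₂ * (C₂ + 1) * t / 2) + exp (C₂ * (C₂ + 1) * t / 2)) := by
        gcongr
    _ = 2 * C₁ * exp (C₂ * |u|) * exp (C₂ * (C₂ + 1) * t / 2) := by ring

lemma abs_log_le_max_abs_log_of_mem_Icc {a b x : ℝ} (ha : 0 < a) (hx : x ∈ Icc a b) :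
    |log x| ≤ max |log a| |log b| :=
  abs_le_max_abs_abs (log_le_log ha hx.1) (log_le_log (ha.trans_le hx.1) hx.2)

lemma volume_real_le_sSup {K : Set ℝ} (hK : BddAbove K) (hK₀ : K ⊆ Ici 0) :
    volume.real K ≤ sSup K := by
  have hsub : K ⊆ Icc 0 (sSup K) := fun x hx => ⟨hK₀ hx, le_csSup hK hx⟩
  calc volume.real K ≤ volume.real (Icc 0 (sSup K)) := measureReal_mono hsub measure_Icc_lt_top.ne
    _ = sSup K := by rw [volume_real_Icc_of_le (Real.sSup_nonneg fun x hx => hK₀ hx), sub_zero]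

theorem kernel_L1_bound_on_compacts_general
    (K : Set ℝ) (hK : IsCompact K) (hKne : K.Nonempty) (hKpos : K ⊆ Set.Ioi (0 : ℝ))
    (C₁ C₂ : ℝ) (hC₁ : 0 < C₁) (hC₂ : 0 < C₂)
    (f : ℝ → ℝ)
    (hbd : ∀ x : ℝ, 0 < x → |f x| ≤ C₁ * Real.exp (C₂ * |Real.log x|)) :
    ∀ t : ℝ, 0 < t →
      ∫ x in K, |∫ w in Set.Ioi (0 : ℝ), f w * pGBM t w x|
        ≤ 2 * C₁ * Real.exp ((C₂ + 2) * max |Real.log (sInf K)| |Real.log (sSup K)|)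
            * Real.exp (C₂ * (C₂ + 1) * t / 2) := by
  intro t ht
  set M := max |log (sInf K)| |log (sSup K)|
  have hlog : ∀ x ∈ K, |log x| ≤ M := fun x hx => abs_log_le_max_abs_log_of_mem_Icc
    (hKpos (hK.sInf_mem hKne)) ⟨csInf_le hK.bddBelow hx, le_csSup hK.bddAbove hx⟩
  have hvol : volume.real K ≤ exp (2 * M) :=
    calc volume.real K ≤ sSup K := volume_real_le_sSup hK.bddAbove (hKpos.trans Ioi_subset_Ici_self)
      _ = exp (log (sSup K)) := (exp_log (hKpos (hK.sSup_mem hKne))).symm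
      _ ≤ exp (2 * M) := by
        have hM : |log (sSup K)| ≤ M := le_max_right _ _
        gcongr; linarith [le_abs_self (log (sSup K)), abs_nonneg (log (sSup K))]
  calc ∫ x in K, |∫ w in Ioi 0, f w * pGBM t w x|
      ≤ 2 * C₁ * exp (C₂ * M) * exp (C₂ * (C₂ + 1) * t / 2) * volume.real K := by
        refine (le_abs_self _).trans ?_
        rw [← Real.norm_eq_abs]
        refine norm_setIntegral_le_of_norm_le_const hK.measure_lt_top fun x hx => ?_
        rw [Real.norm_eq_abs, abs_abs, ← exp_log (hKpos hx)]
        refine (abs_integral_mul_pGBM_exp_le ht hC₁.le hC₂.le hbd _).trans ?_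
        gcongr; exact hlog x hx
    _ ≤ 2 * C₁ * exp (C₂ * M) * exp (C₂ * (C₂ + 1) * t / 2) * exp (2 * M) := by gcongr
    _ = 2 * C₁ * exp ((C₂ + 2) * M) * exp (C₂ * (C₂ + 1) * t / 2) := by
        rw [add_mul, exp_add]; ring

/-- For a compact `K ⊂ (0,∞)` and a continuous `f` with
`|f(x)| ≤ C₁ e^{C₂|log x|}`, the kernel operator `P_t f(x) = ∫₀^∞ f(w) p_GBM(t,w;x) dw`
satisfies `∫_K |P_t f| ≤ 2 C₁ e^{(C₂+2)M} e^{C₂(C₂+1)t/2}` with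
`M = max{|log min K|, |log max K|}`. -/
theorem kernel_L1_bound_on_compacts
    (K : Set ℝ) (hK : IsCompact K) (hKne : K.Nonempty) (hKpos : K ⊆ Set.Ioi (0 : ℝ))
    (C₁ C₂ : ℝ) (hC₁ : 0 < C₁) (hC₂ : 0 < C₂)
    (f : ℝ → ℝ) (hf : ContinuousOn f (Set.Ioi (0 : ℝ)))
    (hbd : ∀ x : ℝ, 0 < x → |f x| ≤ C₁ * Real.exp (C₂ * |Real.log x|)) :
    ∀ t : ℝ, 0 < t →
      ∫ x in K, |∫ w in Set.Ioi (0 : ℝ), f w * pGBM t w x|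
        ≤ 2 * C₁ * Real.exp ((C₂ + 2) * max |Real.log (sInf K)| |Real.log (sSup K)|)
            * Real.exp (C₂ * (C₂ + 1) * t / 2) :=
  kernel_L1_bound_on_compacts_general K hK hKne hKpos C₁ C₂ hC₁ hC₂ f hbd
end

section
/- For all t > 0, w > 0 and x > 0 the geometric Brownian motion transition kernel satisfies the adjoint identity (x²/2) ∂²_x p_GBM(t, w; x) = ∂²_w ( (w²/2) p_GBM(t, w; x) ), where both sides are classical partial derivatives. -/
open MeasureTheory Set

open Real Filter Topology

/-! In the variable `u = log z` the operator `d²/dz²` acting on `z ^ (1/2) * ψ (log z)` becomes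
`z ^ (-3/2) * (ψ'' - ψ / 4)`. The kernel has this form in `x` with `ψ = p(t, log w - ·)`, while
`(w²/2) p_GBM` has it in `w` with `ψ = p(t, · - log x)`; both sides of the identity therefore
equal `(√x w^{-3/2} e^{-t/8} / 2) (p'' - p / 4)(t, log w - log x)`. -/

theorem hasDerivAt_rpow_mul_comp_log {ψ : ℝ → ℝ} {ψ' z : ℝ} (a : ℝ) (hz : 0 < z)
    (hψ : HasDerivAt ψ ψ' (log z)) :
    HasDerivAt (fun z => z ^ a * ψ (log z)) (z ^ (a - 1) * (a * ψ (log z) + ψ')) z := by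
  refine ((hasDerivAt_rpow_const (p := a) (Or.inl hz.ne')).mul
    (hψ.comp z (hasDerivAt_log hz.ne'))).congr_deriv ?_
  rw [rpow_sub_one hz.ne', Function.comp_apply]
  field_simp

theorem deriv_deriv_rpow_mul_comp_log {ψ : ℝ → ℝ} {z : ℝ} (a : ℝ) (hψ : ContDiff ℝ 2 ψ)
    (hz : 0 < z) :
    deriv (deriv fun z => z ^ a * ψ (log z)) z = z ^ (a - 2) *
      (a * (a - 1) * ψ (log z) + (2 * a - 1) * deriv ψ (log z) + deriv (deriv ψ) (log z)) := by
  obtain ⟨hψ₁, -, hψ₂⟩ := contDiff_succ_iff_deriv (n := 1).1 hψ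
  have hfirst : deriv (fun z => z ^ a * ψ (log z)) =ᶠ[𝓝 z]
      fun z => z ^ (a - 1) * (a * ψ (log z) + deriv ψ (log z)) := by
    filter_upwards [eventually_gt_nhds hz] with y hy
    exact (hasDerivAt_rpow_mul_comp_log a hy (hψ₁ _).hasDerivAt).deriv
  have hψ' : HasDerivAt (fun u => a * ψ u + deriv ψ u)
      (a * deriv ψ (log z) + deriv (deriv ψ) (log z)) (log z) :=
    ((hψ₁ _).hasDerivAt.const_mul a).add ((hψ₂.differentiable one_ne_zero) _).hasDerivAt
  rw [hfirst.deriv_eq, (hasDerivAt_rpow_mul_comp_log (a - 1) hz hψ').deriv,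
    show a - 1 - 1 = a - 2 by ring]
  ring

theorem deriv_deriv_comp_const_sub (f : ℝ → ℝ) (a x : ℝ) :
    deriv (deriv fun y => f (a - y)) x = deriv (deriv f) (a - x) := by
  have h : deriv (fun y => f (a - y)) = fun y => -deriv f (a - y) :=
    funext fun y => deriv_comp_const_sub f a y
  rw [h, deriv.fun_neg, deriv_comp_const_sub (deriv f) a x, neg_neg]

theorem deriv_deriv_comp_sub_const (f : ℝ → ℝ) (a x : ℝ) :
    deriv (deriv fun y => f (y - a)) x = deriv (deriv f) (x - a) := by
  have h : deriv (fun y => f (y - a)) = fun y => deriv f (y - a) :=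
    funext fun y => deriv_comp_sub_const f a y
  rw [h, deriv_comp_sub_const (deriv f) a x]

theorem contDiff_heatK (t : ℝ) {n : WithTop ℕ∞} : ContDiff ℝ n (heatK t) := by
  unfold heatK
  fun_prop

theorem pGBM_eq_rpow_mul_comp_log (t w : ℝ) :
    pGBM t w = fun z => exp (-t / 8) * w ^ (-(3 : ℝ) / 2) *
      (z ^ (1 / 2 : ℝ) * heatK t (log w - log z)) := by
  funext z
  rw [pGBM, sqrt_eq_rpow]
  ring

theorem sq_div_two_mul_pGBM_eventuallyEq (t x : ℝ) {w : ℝ} (hw : 0 < w) :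
    (fun v => v ^ 2 / 2 * pGBM t v x) =ᶠ[𝓝 w] fun v => √x * exp (-t / 8) / 2 *
      (v ^ (1 / 2 : ℝ) * heatK t (log v - log x)) := by
  filter_upwards [eventually_gt_nhds hw] with v hv
  have hpow : v ^ 2 * v ^ (-(3 : ℝ) / 2) = v ^ (1 / 2 : ℝ) := by
    rw [← rpow_natCast, ← rpow_add hv]
    norm_num
  rw [pGBM, ← hpow]
  ring

theorem pGBM_adjoint_identity_general (t w x : ℝ) (hw : 0 < w) (hx : 0 < x) :
    x ^ 2 / 2 * deriv (deriv (fun z => pGBM t w z)) x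
      = deriv (deriv (fun v => v ^ 2 / 2 * pGBM t v x)) w := by
  have hL := deriv_deriv_rpow_mul_comp_log (1 / 2) (ψ := fun u => heatK t (log w - u))
    ((contDiff_heatK t).comp (by fun_prop)) hx
  have hR := deriv_deriv_rpow_mul_comp_log (1 / 2) (ψ := fun u => heatK t (u - log x))
    ((contDiff_heatK t).comp (by fun_prop)) hw
  rw [deriv_deriv_comp_const_sub] at hL
  rw [deriv_deriv_comp_sub_const] at hR
  rw [(sq_div_two_mul_pGBM_eventuallyEq t x hw).deriv.deriv_eq, deriv_const_mul_field',
    deriv_const_mul_field, hR, pGBM_eq_rpow_mul_comp_log, deriv_const_mul_field',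
    deriv_const_mul_field, hL]
  have hsqrt : x ^ 2 * x ^ (1 / 2 - 2 : ℝ) = √x := by
    rw [sqrt_eq_rpow, ← rpow_natCast, ← rpow_add hx]
    norm_num
  simp only [show (2 : ℝ) * (1 / 2) - 1 = 0 by norm_num, zero_mul, add_zero]
  rw [← hsqrt, show (-(3 : ℝ) / 2) = 1 / 2 - 2 by norm_num]
  ring

/-- The adjoint identity for the GBM kernel: for all `t, w, x > 0`,
`(x²/2) ∂²_x p_GBM(t,w;x) = ∂²_w ((w²/2) p_GBM(t,w;x))`. -/
theorem pGBM_adjoint_identity (t w x : ℝ) (ht : 0 < t) (hw : 0 < w) (hx : 0 < x) :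
    x ^ 2 / 2 * deriv (deriv (fun z => pGBM t w z)) x
      = deriv (deriv (fun v => v ^ 2 / 2 * pGBM t v x)) w :=
  pGBM_adjoint_identity_general t w x hw hx
end
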